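/- The C-element equals the weave of two wires with common output: pref*[a?; c!] || pref*[b?; c!] = pref*[(a? || b?); c!], i.e., the weave of two trace structures each describing a wire with the same output symbol c yields the C-element trace structure whose traces are all prefixes of repetitions of (both a and b in either order, then c). -/

import Mathlib

/-- A trace structure: input alphabet, output alphabet, and a set of traces. -/
structure TraceStructure (α : Type*) where
  i : Set α
  o : Set α
  t : Set (List α)

namespace TraceStructure

variable {α : Type*}

/-- Total alphabet. -/
def alph (R : TraceStructure α) : Set α := R.i ∪ R.o

/-- Projection of a trace onto an alphabet: delete all symbols not in `A`. -/
noncomputable def projT (A : Set α) (w : List α) : List α :=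
  w.filter (fun x => @decide (x ∈ A) (Classical.propDecidable _))

/-- Reflection: swap input and output alphabets. -/
def reflect (R : TraceStructure α) : TraceStructure α := ⟨R.o, R.i, R.t⟩

/-- Weave of two trace structures. -/
noncomputable def weave (R S : TraceStructure α) : TraceStructure α :=
  ⟨R.i ∪ S.i, R.o ∪ S.o,
   {w | (∀ x ∈ w, x ∈ R.alph ∪ S.alph) ∧ projT R.alph w ∈ R.t ∧ projT S.alph w ∈ S.t}⟩

/-- Union of two trace structures. -/
def tsUnion (R S : TraceStructure α) : TraceStructure α :=
  ⟨R.i ∪ S.i, R.o ∪ S.o, R.t ∪ S.t⟩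

/-- Projection of a trace structure onto an alphabet `A`. -/
noncomputable def tsProj (R : TraceStructure α) (A : Set α) : TraceStructure α :=
  ⟨R.i ∩ A, R.o ∩ A, {w | ∃ u ∈ R.t, w = projT A u}⟩

/-- Prefix closure of a set of traces. -/
def prefSet (T : Set (List α)) : Set (List α) := {s | ∃ u, s ++ u ∈ T}

/-- Prefix closure of a trace structure. -/
def pref (R : TraceStructure α) : TraceStructure α := ⟨R.i, R.o, prefSet R.t⟩

/-- Kleene star (arbitrary repetition) of a set of traces. -/
def star (L : Set (List α)) : Set (List α) :=
  {w | ∃ ls : List (List α), (∀ u ∈ ls, u ∈ L) ∧ w = ls.flatten}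

/-- A set of traces is prefix-closed. -/
def PrefixClosed (T : Set (List α)) : Prop := ∀ s u : List α, s ++ u ∈ T → s ∈ T

/-- Rule R₀: no two consecutive transitions on the same wire. -/
def SatR0 (R : TraceStructure α) : Prop :=
  ∀ s ∈ R.t, ∀ x ∈ R.alph, s ++ [x, x] ∉ R.t

/-- Rule R₁: symbols of the same type commute. -/
def SatR1 (R : TraceStructure α) : Prop :=
  ∀ (s t : List α) (x y : α),
    ((x ∈ R.i ∧ y ∈ R.i) ∨ (x ∈ R.o ∧ y ∈ R.o)) →
    (s ++ [x, y] ++ t ∈ R.t ↔ s ++ [y, x] ++ t ∈ R.t)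

/-- Rule R₂′. -/
def SatR2' (R : TraceStructure α) : Prop :=
  ∀ (s t : List α) (x y z : α),
    ((x ∈ R.i ∧ z ∈ R.i ∧ y ∈ R.o) ∨ (x ∈ R.o ∧ z ∈ R.o ∧ y ∈ R.i)) →
    s ++ [x, y] ++ t ++ [z] ∈ R.t → s ++ [y, x] ++ t ∈ R.t →
    s ++ [y, x] ++ t ++ [z] ∈ R.t

/-- Rule R₃′ (synchronization class). -/
def SatR3' (R : TraceStructure α) : Prop :=
  ∀ (s : List α) (x y : α), x ≠ y → x ∈ R.alph → y ∈ R.alph →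
    s ++ [x] ∈ R.t → s ++ [y] ∈ R.t → s ++ [x, y] ∈ R.t

/-- Rule R₃′′ (data communication class). -/
def SatR3'' (R : TraceStructure α) : Prop :=
  ∀ (s : List α) (x y : α), x ≠ y → x ∈ R.alph → y ∈ R.alph →
    ¬(x ∈ R.i ∧ y ∈ R.i) →
    s ++ [x] ∈ R.t → s ++ [y] ∈ R.t → s ++ [x, y] ∈ R.t

/-- Rule R₃′′′ (arbitration class). -/
def SatR3''' (R : TraceStructure α) : Prop :=
  ∀ (s : List α) (x y : α),
    ((x ∈ R.i ∧ y ∈ R.o) ∨ (x ∈ R.o ∧ y ∈ R.i)) →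
    s ++ [x] ∈ R.t → s ++ [y] ∈ R.t → s ++ [x, y] ∈ R.t

/-- The WIRE component `pref *[a?; b!]`. -/
def wire (a b : α) : TraceStructure α :=
  ⟨{a}, {b}, prefSet (star {[a, b]})⟩

/-- The C-element `pref *[(a? || b?); c!]`. -/
def cElement (a b c : α) : TraceStructure α :=
  ⟨{a, b}, {c}, prefSet (star ({[a, b, c], [b, a, c]} : Set (List α)))⟩

/-- Interleaving (shuffle) of two traces. -/
inductive Interleave : List α → List α → List α → Prop
  | nil : Interleave [] [] []
  | left {x : α} {u v t : List α} : Interleave u v t → Interleave (x :: u) v (x :: t)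
  | right {x : α} {u v t : List α} : Interleave u v t → Interleave u (x :: v) (x :: t)

end TraceStructure

open TraceStructure

/-!
Both components are finite automata. The wire `pref *[a?; c!]` only has to remember whether an `a`
is still waiting for its `c`; the C-element has to remember this for `a` and for `b` separately,
and may fire `c` only when both are pending. So the C-element is exactly the synchronous product of
the two wire automata, synchronised on `c`, and a word over `{a, b, c}` is a run of the product iff
its projections onto `{a, c}` and `{b, c}` are runs of the two wires, which is the definition of
the weave.
-/

namespace TraceStructure

variable {α : Type*}

theorem projT_cons_of_mem {A : Set α} {x : α} (h : x ∈ A) (w : List α) :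
    projT A (x :: w) = x :: projT A w := by
  simp [projT, h]

theorem projT_cons_of_not_mem {A : Set α} {x : α} (h : x ∉ A) (w : List α) :
    projT A (x :: w) = projT A w := by
  simp [projT, h]

theorem nil_mem_star (L : Set (List α)) : [] ∈ star L := ⟨[], by simp, rfl⟩

theorem append_mem_star {L : Set (List α)} {l v : List α} (hl : l ∈ L) (hv : v ∈ star L) :
    l ++ v ∈ star L := by
  obtain ⟨ls, hls, rfl⟩ := hv
  exact ⟨l :: ls, by simpa using ⟨hl, hls⟩, by simp⟩

/-- `WireRun a c p s`: the wire can read `s` starting in state `p`, where `p = true` means that an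
`a` is waiting for its `c`. -/
inductive WireRun (a c : α) : Bool → List α → Prop
  | nil (p) : WireRun a c p []
  | input {s} : WireRun a c true s → WireRun a c false (a :: s)
  | output {s} : WireRun a c false s → WireRun a c true (c :: s)

/-- `CElementRun a b c p q s`: the C-element can read `s` starting in the state where `p` resp. `q`
records whether an `a` resp. a `b` is waiting for the next `c`. -/
inductive CElementRun (a b c : α) : Bool → Bool → List α → Prop
  | nil (p q) : CElementRun a b c p q []
  | left {q s} : CElementRun a b c true q s → CElementRun a b c false q (a :: s)
  | right {p s} : CElementRun a b c p true s → CElementRun a b c p false (b :: s)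
  | output {s} : CElementRun a b c false false s → CElementRun a b c true true (c :: s)

section Wire

variable {a c : α}

theorem WireRun.of_append {p : Bool} {s u : List α} (h : WireRun a c p (s ++ u)) :
    WireRun a c p s := by
  induction s generalizing p with
  | nil => exact .nil p
  | cons z s ih =>
    cases h with
    | input h => exact .input (ih h)
    | output h => exact .output (ih h)

theorem WireRun.of_mem_star {s : List α} (h : s ∈ star {[a, c]}) : WireRun a c false s := by
  obtain ⟨ls, hls, rfl⟩ := h
  induction ls with
  | nil => exact .nil false
  | cons l ls ih =>
    obtain rfl : l = [a, c] := hls l List.mem_cons_self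
    exact .input (.output (ih fun u hu => hls u (List.mem_cons_of_mem _ hu)))

theorem WireRun.exists_append_mem_star {p : Bool} {s : List α} (h : WireRun a c p s) :
    ∃ u, (if p then [a] else []) ++ s ++ u ∈ star {[a, c]} := by
  induction h with
  | nil p =>
    cases p
    · exact ⟨[], nil_mem_star _⟩
    · exact ⟨[c], by simpa using append_mem_star (Set.mem_singleton [a, c]) (nil_mem_star _)⟩
  | input _ ih => simpa using ih
  | output _ ih =>
    obtain ⟨u, hu⟩ := ih
    exact ⟨u, by simpa using append_mem_star (Set.mem_singleton _) hu⟩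

theorem mem_wire_t_iff {s : List α} : s ∈ (wire a c).t ↔ WireRun a c false s :=
  ⟨fun ⟨_, hu⟩ => (WireRun.of_mem_star hu).of_append,
    fun h => by simpa [wire, prefSet] using h.exists_append_mem_star⟩

theorem WireRun.cons_input_iff (hac : a ≠ c) {p : Bool} {s : List α} :
    WireRun a c p (a :: s) ↔ p = false ∧ WireRun a c true s := by
  refine ⟨fun h => ?_, fun ⟨hp, h⟩ => hp ▸ .input h⟩
  cases h with
  | input h => exact ⟨rfl, h⟩
  | output => exact absurd rfl hac

theorem WireRun.cons_output_iff (hac : a ≠ c) {p : Bool} {s : List α} :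
    WireRun a c p (c :: s) ↔ p = true ∧ WireRun a c false s := by
  refine ⟨fun h => ?_, fun ⟨hp, h⟩ => hp ▸ .output h⟩
  cases h with
  | input => exact absurd rfl hac
  | output h => exact ⟨rfl, h⟩

end Wire

section CElement

variable {a b c : α}

theorem CElementRun.of_append {p q : Bool} {s u : List α}
    (h : CElementRun a b c p q (s ++ u)) : CElementRun a b c p q s := by
  induction s generalizing p q with
  | nil => exact .nil p q
  | cons z s ih =>
    cases h with
    | left h => exact .left (ih h)
    | right h => exact .right (ih h)
    | output h => exact .output (ih h)

theorem CElementRun.of_mem_star {s : List α} (h : s ∈ star {[a, b, c], [b, a, c]}) :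
    CElementRun a b c false false s := by
  obtain ⟨ls, hls, rfl⟩ := h
  induction ls with
  | nil => exact .nil false false
  | cons l ls ih =>
    have hrest := ih fun u hu => hls u (List.mem_cons_of_mem _ hu)
    rcases hls l List.mem_cons_self with rfl | rfl
    · exact .left (.right (.output hrest))
    · exact .right (.left (.output hrest))

/-- The words leading from the initial state of the C-element to the state `(p, q)`. -/
def cElementPending (a b : α) : Bool → Bool → Set (List α)
  | false, false => {[]}
  | true, false => {[a]}
  | false, true => {[b]}
  | true, true => {[a, b], [b, a]}

theorem append_left_mem_cElementPending {q : Bool} {w : List α}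
    (hw : w ∈ cElementPending a b false q) : w ++ [a] ∈ cElementPending a b true q := by
  cases q <;> simp_all [cElementPending]

theorem append_right_mem_cElementPending {p : Bool} {w : List α}
    (hw : w ∈ cElementPending a b p false) : w ++ [b] ∈ cElementPending a b p true := by
  cases p <;> simp_all [cElementPending]

theorem CElementRun.exists_append_mem_star {p q : Bool} {s : List α}
    (h : CElementRun a b c p q s) :
    ∃ u, ∀ w ∈ cElementPending a b p q, w ++ s ++ u ∈ star {[a, b, c], [b, a, c]} := by
  have habc : [a, b, c] ∈ ({[a, b, c], [b, a, c]} : Set (List α)) := .inl rfl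
  have hbac : [b, a, c] ∈ ({[a, b, c], [b, a, c]} : Set (List α)) := .inr rfl
  induction h with
  | nil p q =>
    cases p <;> cases q
    · exact ⟨[], by simpa [cElementPending] using nil_mem_star _⟩
    · exact ⟨[a, c], by simpa [cElementPending] using append_mem_star hbac (nil_mem_star _)⟩
    · exact ⟨[b, c], by simpa [cElementPending] using append_mem_star habc (nil_mem_star _)⟩
    · exact ⟨[c], by simpa [cElementPending] using
        ⟨append_mem_star habc (nil_mem_star _), append_mem_star hbac (nil_mem_star _)⟩⟩
  | left _ ih =>
    obtain ⟨u, hu⟩ := ih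
    exact ⟨u, fun w hw => by simpa using hu _ (append_left_mem_cElementPending hw)⟩
  | right _ ih =>
    obtain ⟨u, hu⟩ := ih
    exact ⟨u, fun w hw => by simpa using hu _ (append_right_mem_cElementPending hw)⟩
  | @output t _ ih =>
    obtain ⟨u, hu⟩ := ih
    have hu : t ++ u ∈ star {[a, b, c], [b, a, c]} := by simpa [cElementPending] using hu
    exact ⟨u, by
      simpa [cElementPending] using ⟨append_mem_star habc hu, append_mem_star hbac hu⟩⟩

theorem mem_cElement_t_iff {s : List α} :
    s ∈ (cElement a b c).t ↔ CElementRun a b c false false s :=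
  ⟨fun ⟨_, hu⟩ => (CElementRun.of_mem_star hu).of_append,
    fun h => by simpa [cElement, prefSet, cElementPending] using h.exists_append_mem_star⟩

theorem CElementRun.cons_left_iff (hab : a ≠ b) (hac : a ≠ c) {p q : Bool} {s : List α} :
    CElementRun a b c p q (a :: s) ↔ p = false ∧ CElementRun a b c true q s := by
  refine ⟨fun h => ?_, fun ⟨hp, h⟩ => hp ▸ .left h⟩
  cases h with
  | left h => exact ⟨rfl, h⟩
  | right => exact absurd rfl hab
  | output => exact absurd rfl hac

theorem CElementRun.cons_right_iff (hab : a ≠ b) (hbc : b ≠ c) {p q : Bool} {s : List α} :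
    CElementRun a b c p q (b :: s) ↔ q = false ∧ CElementRun a b c p true s := by
  refine ⟨fun h => ?_, fun ⟨hq, h⟩ => hq ▸ .right h⟩
  cases h with
  | left => exact absurd rfl hab.symm
  | right h => exact ⟨rfl, h⟩
  | output => exact absurd rfl hbc

theorem CElementRun.cons_output_iff (hac : a ≠ c) (hbc : b ≠ c) {p q : Bool} {s : List α} :
    CElementRun a b c p q (c :: s) ↔
      p = true ∧ q = true ∧ CElementRun a b c false false s := by
  refine ⟨fun h => ?_, fun ⟨hp, hq, h⟩ => hp ▸ hq ▸ .output h⟩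
  cases h with
  | left => exact absurd rfl hac.symm
  | right => exact absurd rfl hbc.symm
  | output h => exact ⟨rfl, rfl, h⟩

theorem CElementRun.not_cons {p q : Bool} {z : α} {s : List α} (ha : z ≠ a) (hb : z ≠ b)
    (hc : z ≠ c) : ¬CElementRun a b c p q (z :: s) := by
  rintro (_ | _ | _ | _) <;> contradiction

theorem cElementRun_iff_wireRun_projT (hab : a ≠ b) (hac : a ≠ c) (hbc : b ≠ c) {p q : Bool}
    {s : List α} :
    CElementRun a b c p q s ↔ (∀ z ∈ s, z = a ∨ z = b ∨ z = c) ∧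
      WireRun a c p (projT (wire a c).alph s) ∧ WireRun b c q (projT (wire b c).alph s) := by
  induction s generalizing p q with
  | nil => exact ⟨fun _ => ⟨by simp, .nil p, .nil q⟩, fun _ => .nil p q⟩
  | cons z s ih =>
    rw [List.forall_mem_cons]
    by_cases ha : z = a
    · subst ha
      rw [projT_cons_of_mem (by simp [alph, wire]),
        projT_cons_of_not_mem (by simp [alph, wire, hab, hac]), CElementRun.cons_left_iff hab hac,
        WireRun.cons_input_iff hac, ih]
      tauto
    by_cases hb : z = b
    · subst hb
      rw [projT_cons_of_not_mem (by simp [alph, wire, Ne.symm hab, hbc]),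
        projT_cons_of_mem (by simp [alph, wire]), CElementRun.cons_right_iff hab hbc,
        WireRun.cons_input_iff hbc, ih]
      tauto
    by_cases hc : z = c
    · subst hc
      rw [projT_cons_of_mem (by simp [alph, wire]), projT_cons_of_mem (by simp [alph, wire]),
        CElementRun.cons_output_iff hac hbc, WireRun.cons_output_iff hac,
        WireRun.cons_output_iff hbc, ih]
      tauto
    simp only [CElementRun.not_cons ha hb hc, ha, hb, hc, false_or, false_and]

theorem weave_wires_t (hab : a ≠ b) (hac : a ≠ c) (hbc : b ≠ c) :
    (weave (wire a c) (wire b c)).t = (cElement a b c).t := by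
  ext s
  rw [mem_cElement_t_iff, cElementRun_iff_wireRun_projT hab hac hbc, ← mem_wire_t_iff,
    ← mem_wire_t_iff]
  simp only [weave, alph, wire, Set.mem_union, Set.mem_singleton_iff, Set.mem_ofPred_eq]
  exact and_congr_left' (forall₂_congr fun z _ => by tauto)

end CElement

end TraceStructure

open TraceStructure

theorem weave_wires_eq_cElement {α : Type*} (a b c : α)
    (hab : a ≠ b) (hac : a ≠ c) (hbc : b ≠ c) :
    weave (wire a c) (wire b c) = cElement a b c := by
  have ht := weave_wires_t hab hac hbc
  simp only [weave, wire, cElement, TraceStructure.mk.injEq] at ht ⊢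
  exact ⟨Set.singleton_union, Set.union_self _, ht⟩
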